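/- Under the prior π(γ) = B(|γ|+1, p+q−|γ|+1) / 2^{#{j : γ_j^x > 0}}, for each fixed index j with 1 ≤ j ≤ p, the marginal probability that γ_j^x = 0 equals 1/2; that is, the sum of π(γ) over all configurations γ with γ_j^x = 0 equals 1/2. -/

import Mathlib

/-!
Writing `B(k+1, m+1) = ∫₀¹ t^k (1-t)^m dt`, the prior becomes a mixture over `t ∈ [0,1]` of
product measures: given `t`, each `γⱼˣ` is `0` with probability `1-t` and `1` or `2` with
probability `t/2` each, and each `γₖᶻ` is `1` with probability `t`. For fixed `t` the event
`γⱼˣ = 0` therefore has probability `1 - t`, and `∫₀¹ (1-t) dt = 1/2`.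
-/

open Finset

/-- The Beta function `B(a,b) = ∫₀¹ t^(a-1) (1-t)^(b-1) dt`. -/
noncomputable def Beta (a b : ℝ) : ℝ :=
  ∫ t in (0:ℝ)..1, t ^ (a - 1) * (1 - t) ^ (b - 1)

/-- Number of active (nonzero) components of `γˣ`, i.e. `#{j : γⱼˣ > 0}`. -/
def nActive {p : ℕ} (γx : Fin p → Fin 3) : ℕ :=
  (univ.filter fun j => 0 < (γx j : ℕ)).card

/-- The number of included predictors `|γ| = #{j : γⱼˣ > 0} + ∑ₖ γₖᶻ`. -/
def gammaSize {p q : ℕ} (γ : (Fin p → Fin 3) × (Fin q → Fin 2)) : ℕ :=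
  nActive γ.1 + ∑ k, (γ.2 k : ℕ)

/-- The prior `π(γ) = B(|γ|+1, p+q-|γ|+1) / 2^{#{j : γⱼˣ > 0}}`. -/
noncomputable def prior (p q : ℕ) (γ : (Fin p → Fin 3) × (Fin q → Fin 2)) : ℝ :=
  Beta ((gammaSize γ : ℝ) + 1) ((p : ℝ) + (q : ℝ) - (gammaSize γ : ℝ) + 1) /
    2 ^ nActive γ.1

lemma Beta_natCast_add_one (k m : ℕ) :
    Beta ((k : ℝ) + 1) ((m : ℝ) + 1) = ∫ t in (0:ℝ)..1, t ^ k * (1 - t) ^ m := by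
  refine intervalIntegral.integral_congr fun t _ => ?_
  simp only [add_sub_cancel_right, Real.rpow_natCast]

lemma prod_ite_eq_zero_eq_pow_mul_pow {ι α M : Type*} [Fintype ι] [Zero α] [DecidableEq α]
    [CommMonoid M] (f : ι → α) (a b : M) :
    ∏ i, (if f i = 0 then a else b) = a ^ #{i | f i = 0} * b ^ #{i | f i ≠ 0} := by
  rw [prod_ite, prod_const, prod_const]

lemma sum_filter_apply_eq_prod {ι α R : Type*} [Fintype ι] [DecidableEq ι] [Fintype α]
    [DecidableEq α] [CommSemiring R] (w : ι → α → R) (j : ι) (a : α) :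
    ∑ f ∈ univ.filter (fun f : ι → α => f j = a), ∏ i, w i (f i) =
      w j a * ∏ i ∈ univ.erase j, ∑ v, w i v := by
  -- zeroing the weights `w j v` with `v ≠ a` turns the filtered sum into a full one
  set w' : ι → α → R := fun i v => if i = j ∧ v ≠ a then 0 else w i v
  have hw' (f : ι → α) : ∏ i, w' i (f i) = if f j = a then ∏ i, w i (f i) else 0 := by
    split_ifs with h
    · exact prod_congr rfl fun i _ => if_neg fun hi => hi.2 (hi.1 ▸ h)
    · exact prod_eq_zero (mem_univ j) (if_pos ⟨rfl, h⟩)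
  simp_rw [sum_filter, ← hw', ← Fintype.prod_sum, ← mul_prod_erase univ _ (mem_univ j)]
  congr 1
  · simp [w']
  · refine prod_congr rfl fun i hi => sum_congr rfl fun v _ => if_neg fun h => ?_
    exact (ne_of_mem_erase hi) h.1

lemma nActive_eq_card_ne_zero {p : ℕ} (γx : Fin p → Fin 3) : nActive γx = #{i | γx i ≠ 0} := by
  simp [nActive, Nat.pos_iff_ne_zero]

lemma sum_val_eq_card_ne_zero {ι : Type*} [Fintype ι] (γz : ι → Fin 2) :
    ∑ k, (γz k : ℕ) = #{k | γz k ≠ 0} := by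
  rw [card_filter]
  refine sum_congr rfl fun k _ => ?_
  rcases Fin.exists_fin_two.mp ⟨γz k, rfl⟩ with h | h <;> simp [h]

noncomputable def xWeight (t : ℝ) (v : Fin 3) : ℝ := if v = 0 then 1 - t else t / 2

noncomputable def zWeight (t : ℝ) (v : Fin 2) : ℝ := if v = 0 then 1 - t else t

noncomputable def configWeight {p q : ℕ} (t : ℝ) (γ : (Fin p → Fin 3) × (Fin q → Fin 2)) : ℝ :=
  (∏ i, xWeight t (γ.1 i)) * ∏ k, zWeight t (γ.2 k)

lemma sum_xWeight (t : ℝ) : ∑ v, xWeight t v = 1 := by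
  simp [xWeight, Fin.sum_univ_three]
  ring

lemma sum_zWeight (t : ℝ) : ∑ v, zWeight t v = 1 := by
  simp [zWeight, Fin.sum_univ_two]

lemma continuous_xWeight (v : Fin 3) : Continuous fun t => xWeight t v := by
  unfold xWeight
  split <;> fun_prop

lemma continuous_zWeight (v : Fin 2) : Continuous fun t => zWeight t v := by
  unfold zWeight
  split <;> fun_prop

lemma continuous_configWeight {p q : ℕ} (γ : (Fin p → Fin 3) × (Fin q → Fin 2)) :
    Continuous fun t => configWeight t γ :=
  (continuous_finsetProd _ fun i _ => continuous_xWeight (γ.1 i)).mul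
    (continuous_finsetProd _ fun k _ => continuous_zWeight (γ.2 k))

lemma prior_eq_integral_configWeight (p q : ℕ) (γ : (Fin p → Fin 3) × (Fin q → Fin 2)) :
    prior p q γ = ∫ t in (0:ℝ)..1, configWeight t γ := by
  obtain ⟨γx, γz⟩ := γ
  have hx : #{i | γx i = 0} + #{i | γx i ≠ 0} = p := by
    simpa using card_filter_add_card_filter_not (s := univ) fun i => γx i = 0
  have hz : #{k | γz k = 0} + #{k | γz k ≠ 0} = q := by
    simpa using card_filter_add_card_filter_not (s := univ) fun k => γz k = 0
  have hsize : gammaSize (γx, γz) = #{i | γx i ≠ 0} + #{k | γz k ≠ 0} := by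
    rw [gammaSize, nActive_eq_card_ne_zero, sum_val_eq_card_ne_zero]
  have hrest : (p : ℝ) + q - gammaSize (γx, γz) =
      ((#{i | γx i = 0} + #{k | γz k = 0} : ℕ) : ℝ) := by
    rify at hx hz
    rw [hsize]
    push_cast
    linarith
  rw [prior, hrest, Beta_natCast_add_one, ← intervalIntegral.integral_div]
  refine intervalIntegral.integral_congr fun t _ => ?_
  simp only [configWeight, xWeight, zWeight, prod_ite_eq_zero_eq_pow_mul_pow, hsize,
    nActive_eq_card_ne_zero]
  rw [div_pow]
  ring

lemma sum_configWeight_filter_eq_zero {p q : ℕ} (j : Fin p) (t : ℝ) :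
    ∑ γ ∈ univ.filter (fun γ : (Fin p → Fin 3) × (Fin q → Fin 2) => γ.1 j = 0),
      configWeight t γ = 1 - t := by
  rw [← univ_product_univ, filter_product_left (fun f : Fin p → Fin 3 => f j = 0), sum_product]
  simp only [configWeight, ← mul_sum, ← sum_mul, ← Fintype.prod_sum, sum_zWeight,
    sum_filter_apply_eq_prod, sum_xWeight]
  simp [xWeight]

theorem prior_marginal_x_zero_general (p q : ℕ) (j : Fin p) :
    ∑ γ ∈ univ.filter (fun γ : (Fin p → Fin 3) × (Fin q → Fin 2) => γ.1 j = 0),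
      prior p q γ = 1 / 2 := by
  calc ∑ γ ∈ univ.filter (fun γ : (Fin p → Fin 3) × (Fin q → Fin 2) => γ.1 j = 0), prior p q γ
      = ∫ t in (0:ℝ)..1, ∑ γ ∈ univ.filter
          (fun γ : (Fin p → Fin 3) × (Fin q → Fin 2) => γ.1 j = 0), configWeight t γ := by
        simp_rw [prior_eq_integral_configWeight]
        exact (intervalIntegral.integral_finsetSum fun γ _ =>
          (continuous_configWeight γ).intervalIntegrable 0 1).symm
    _ = ∫ t in (0:ℝ)..1, (1 - t) :=
        intervalIntegral.integral_congr fun t _ => sum_configWeight_filter_eq_zero j t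
    _ = 1 / 2 := by
        rw [intervalIntegral.integral_sub intervalIntegrable_const
          intervalIntegral.intervalIntegrable_id]
        norm_num

/-- For each fixed index `j`, the marginal probability that `γⱼˣ = 0` equals `1/2`. -/
theorem prior_marginal_x_zero (p q : ℕ) (hp : 1 ≤ p) (j : Fin p) :
    ∑ γ ∈ univ.filter (fun γ : (Fin p → Fin 3) × (Fin q → Fin 2) => γ.1 j = 0),
      prior p q γ = 1 / 2 :=
  prior_marginal_x_zero_general p q j
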